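/- (Assuming choice) For any function F : X* → Y and any subset D of X*, there exists a quasi-inverse g of F such that (g ∘ F)(D) ⊆ D; that is, the set Q_D(F) is nonempty. -/

import Mathlib

/-!
By choice, pick for each `y ∈ range F` a preimage, taken in `D` whenever `y ∈ F '' D`. Off
`range F`, send everything to the value already chosen at some `F a`, so that no new values
appear in the range.
-/

open Set

def IsQuasiInverse {α β : Type*} (g : β → α) (F : α → β) : Prop :=
  (∀ y ∈ range F, F (g y) = y) ∧ g '' range F = range g

lemma image_eq_range_piecewise_const {α β : Type*} {s : Set β} [DecidablePred (· ∈ s)]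
    (f : β → α) {b : β} (hb : b ∈ s) :
    s.piecewise f (fun _ => f b) '' s = range (s.piecewise f fun _ => f b) := by
  refine (image_subset_range _ _).antisymm ?_
  rintro _ ⟨y, rfl⟩
  by_cases hy : y ∈ s
  · exact ⟨y, hy, rfl⟩
  · exact ⟨b, hb, by simp [piecewise, hy, hb]⟩

lemma exists_rightInvOn_range_mapsTo {α β : Type*} [Nonempty α] (D : Set α) (F : α → β) :
    ∃ s : β → α, (∀ y ∈ range F, F (s y) = y) ∧ MapsTo (s ∘ F) D D := by
  have hpre : ∀ y, ∃ x, (y ∈ range F → F x = y) ∧ (y ∈ F '' D → x ∈ D) := by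
    intro y
    by_cases hD : y ∈ F '' D
    · obtain ⟨x, hx, rfl⟩ := hD
      exact ⟨x, fun _ => rfl, fun _ => hx⟩
    by_cases hF : y ∈ range F
    · obtain ⟨x, rfl⟩ := hF
      exact ⟨x, fun _ => rfl, fun h => absurd h hD⟩
    · exact ⟨Classical.arbitrary α, fun h => absurd h hF, fun h => absurd h hD⟩
  choose s hsF hsD using hpre
  exact ⟨s, hsF, fun x hx => hsD _ (mem_image_of_mem F hx)⟩

theorem exists_isQuasiInverse_mapsTo {α β : Type*} [Nonempty α] (D : Set α) (F : α → β) :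
    ∃ g : β → α, IsQuasiInverse g F ∧ MapsTo (g ∘ F) D D := by
  classical
  obtain ⟨s, hsF, hsD⟩ := exists_rightInvOn_range_mapsTo D F
  let a : α := Classical.arbitrary α
  have ha : F a ∈ range F := mem_range_self a
  refine ⟨(range F).piecewise s fun _ => s (F a), ⟨fun y hy => ?_, ?_⟩, fun x hx => ?_⟩
  · rw [piecewise_eq_of_mem _ _ _ hy]
    exact hsF y hy
  · exact image_eq_range_piecewise_const s ha
  · simpa [Function.comp_def, piecewise_eq_of_mem _ _ _ (mem_range_self x)] using hsD hx

theorem stmt_15_general {X Y : Type*} (D : Set (List X)) (F : List X → Y) :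
    ∃ g : Y → List X,
      (∀ y ∈ Set.range F, F (g y) = y) ∧
      g '' Set.range F = Set.range g ∧
      (g ∘ F) '' D ⊆ D := by
  obtain ⟨g, ⟨hinv, hrange⟩, hD⟩ := exists_isQuasiInverse_mapsTo D F
  exact ⟨g, hinv, hrange, hD.image_subset⟩

theorem stmt_15 {X Y : Type*} [Nonempty X] (D : Set (List X)) (F : List X → Y) :
    ∃ g : Y → List X,
      (∀ y ∈ Set.range F, F (g y) = y) ∧
      g '' Set.range F = Set.range g ∧
      (g ∘ F) '' D ⊆ D :=
  stmt_15_general D F
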